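/- Let C_X, C_Z ⊆ F₂^N be subspaces with C_X^⊥ ⊆ C_Z and C_Z^⊥ ⊆ C_X, let x ∈ C_Z, and let B ⊆ Fin N be a set of d coordinates (the boundary qubits) such that: (i) the coordinate-restriction map C_Z → (B → F₂) is surjective; (ii) for every i ∈ B there exists x' ∈ x + C_X^⊥ with supp(x') ∩ B = {i}; (iii) there exists z ∈ C_X with supp(z) = B and ⟨x, z⟩ = 1. Then 2^d * Nat.card {b ∈ C_Z | ∃ x' ∈ x + C_X^⊥, supp(x') ∩ B ⊆ {i | b i = 1}} = (2^d − 1) * Nat.card C_Z. In other words, with ZZ=1 Bell measurements on the d boundary qubit pairs and XX=1 Bell measurements on all other qubit pairs, the loss-free logical Bell-measurement efficiency is exactly 1 − 2^{−d}. -/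
import Mathlib


def pairing {N : ℕ} (u v : Fin N → ZMod 2) : ZMod 2 := ∑ i, u i * v i

def dualCode {N : ℕ} (C : Submodule (ZMod 2) (Fin N → ZMod 2)) :
    Submodule (ZMod 2) (Fin N → ZMod 2) where
  carrier := {u | ∀ c ∈ C, pairing u c = 0}
  add_mem' := by
    intro a b ha hb c hc
    have h : pairing (a + b) c = pairing a c + pairing b c := by
      simp [pairing, add_mul, Finset.sum_add_distrib]
    simp only [Set.mem_setOf_eq] at *
    rw [h, ha c hc, hb c hc, add_zero]
  zero_mem' := by
    intro c hc
    simp [pairing]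
  smul_mem' := by
    intro r a ha c hc
    have h : pairing (r • a) c = r * pairing a c := by
      simp [pairing, Finset.mul_sum, mul_assoc]
    simp only [Set.mem_setOf_eq] at *
    rw [h, ha c hc, mul_zero]

lemma pairing_add_left {N : ℕ} (a b c : Fin N → ZMod 2) :
    pairing (a + b) c = pairing a c + pairing b c := by
  simp [pairing, add_mul, Finset.sum_add_distrib]

lemma zmod2_cases (v : ZMod 2) : v = 0 ∨ v = 1 := by revert v; decide

/-- Theorem 5: with ZZ=1 Bell measurements on the d boundary qubit pairs B and XX=1 Bell
measurements elsewhere, the loss-free logical Bell-measurement efficiency of an [N,1,d]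
planar color code is exactly 1 − 2^{−d}. -/
theorem color_code_mixed_formation (N d : ℕ)
    (CX CZ : Submodule (ZMod 2) (Fin N → ZMod 2))
    (h1 : dualCode CX ≤ CZ) (h2 : dualCode CZ ≤ CX)
    (x : Fin N → ZMod 2) (hx : x ∈ CZ)
    (B : Finset (Fin N)) (hB : B.card = d)
    (hsurj : ∀ g : Fin N → ZMod 2, ∃ b ∈ CZ, ∀ i ∈ B, b i = g i)
    (hstring : ∀ i ∈ B, ∃ x' : Fin N → ZMod 2, x' - x ∈ dualCode CX ∧
      {j : Fin N | x' j = 1} ∩ (B : Set (Fin N)) = {i})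
    (hzbar : ∃ z ∈ CX, {i : Fin N | z i = 1} = (B : Set (Fin N)) ∧ pairing x z = 1) :
    2 ^ d * Nat.card {b : Fin N → ZMod 2 | b ∈ CZ ∧
        ∃ x' : Fin N → ZMod 2, x' - x ∈ dualCode CX ∧ ∀ i ∈ B, x' i = 1 → b i = 1}
      = (2 ^ d - 1) * Nat.card CZ := by
  classical
  obtain ⟨z, hzCX, hzsupp, hxz⟩ := hzbar
  -- key: no manifestation x' has empty support on B
  have key : ∀ x' : Fin N → ZMod 2, x' - x ∈ dualCode CX → ∃ i ∈ B, x' i = 1 := by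
    intro x' hx'
    by_contra h
    push_neg at h
    have hzero : ∀ i ∈ B, x' i = 0 := by
      intro i hi
      rcases zmod2_cases (x' i) with h0 | h1
      · exact h0
      · exact absurd h1 (by simpa using h i hi)
    have h1' : pairing x' z = 1 := by
      have : x' = (x' - x) + x := by ring
      rw [this, pairing_add_left, hx' z hzCX, hxz, zero_add]
    have h0' : pairing x' z = 0 := by
      unfold pairing
      apply Finset.sum_eq_zero
      intro i _
      by_cases hi : i ∈ B
      · rw [hzero i hi, zero_mul]
      · have : z i = 0 := by
          rcases zmod2_cases (z i) with h0 | h1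
          · exact h0
          · exact absurd (hzsupp ▸ (show i ∈ {j | z j = 1} from h1) : i ∈ (B:Set (Fin N))) hi
        rw [this, mul_zero]
    rw [h1'] at h0'
    exact one_ne_zero h0'
  -- the success set equals CZ minus the "zero on B" set
  set K : Set (Fin N → ZMod 2) := {b | b ∈ CZ ∧ ∀ i ∈ B, b i = 0} with hK
  have hset : {b : Fin N → ZMod 2 | b ∈ CZ ∧
        ∃ x' : Fin N → ZMod 2, x' - x ∈ dualCode CX ∧ ∀ i ∈ B, x' i = 1 → b i = 1}
      = (CZ : Set (Fin N → ZMod 2)) \ K := by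
    ext b
    simp only [Set.mem_setOf_eq, Set.mem_diff, SetLike.mem_coe, hK]
    constructor
    · rintro ⟨hb, x', hx', hcond⟩
      refine ⟨hb, fun hKb => ?_⟩
      obtain ⟨i, hi, hxi⟩ := key x' hx'
      have := hcond i hi hxi
      rw [hKb.2 i hi] at this
      exact zero_ne_one this
    · rintro ⟨hb, hnK⟩
      refine ⟨hb, ?_⟩
      have : ∃ i ∈ B, b i = 1 := by
        by_contra h
        push_neg at h
        exact hnK ⟨hb, fun i hi => by
          rcases zmod2_cases (b i) with h0 | h1
          · exact h0
          · exact absurd h1 (h i hi)⟩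
      obtain ⟨i, hi, hbi⟩ := this
      obtain ⟨x', hx', hsupp⟩ := hstring i hi
      refine ⟨x', hx', fun j hj hxj => ?_⟩
      have : j ∈ ({i} : Set (Fin N)) := hsupp ▸ ⟨hxj, hj⟩
      rw [Set.mem_singleton_iff] at this
      rw [this]; exact hbi
  -- restriction map
  let f : CZ →ₗ[ZMod 2] (B → ZMod 2) :=
    (LinearMap.funLeft (ZMod 2) (ZMod 2) (fun i : B => (i : Fin N))).comp CZ.subtype
  have hfsurj : Function.Surjective f := by
    intro g
    obtain ⟨b, hb, hbg⟩ := hsurj (fun i => if h : i ∈ B then g ⟨i, h⟩ else 0)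
    refine ⟨⟨b, hb⟩, funext fun i => ?_⟩
    simp only [f, LinearMap.comp_apply, LinearMap.funLeft_apply, Submodule.subtype_apply]
    rw [hbg i i.2]
    simp
  -- card of kernel
  have hKcard : Nat.card K = Nat.card (LinearMap.ker f) := by
    apply Nat.card_congr
    refine ⟨fun b => ⟨⟨b.1, b.2.1⟩, ?_⟩, fun b => ⟨b.1.1, b.1.2, fun i hi => ?_⟩, ?_, ?_⟩
    · rw [LinearMap.mem_ker]
      funext i
      exact b.2.2 i i.2
    · have := b.2
      rw [LinearMap.mem_ker] at this
      exact congrFun this ⟨i, hi⟩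
    · intro b; rfl
    · intro b; rfl
  have hcard : Nat.card CZ = 2 ^ d * Nat.card (LinearMap.ker f) := by
    have hq : Nat.card (CZ ⧸ LinearMap.ker f) = 2 ^ d := by
      rw [Nat.card_congr (f.quotKerEquivOfSurjective hfsurj).toEquiv]
      simp [Nat.card_eq_fintype_card, ← hB]
    rw [Submodule.card_eq_card_quotient_mul_card (LinearMap.ker f), hq, mul_comm]
  have hKsub : K ⊆ (CZ : Set (Fin N → ZMod 2)) := fun b hb => hb.1
  have hfin : (CZ : Set (Fin N → ZMod 2)).Finite := Set.toFinite _
  rw [hset, Nat.card_coe_set_eq, Set.ncard_diff hKsub (hfin.subset hKsub)]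
  have hCZcard : Nat.card CZ = (CZ : Set (Fin N → ZMod 2)).ncard := by
    rw [← Nat.card_coe_set_eq]; rfl
  have hKcard' : K.ncard = Nat.card (LinearMap.ker f) := by
    rw [← Nat.card_coe_set_eq]; exact hKcard
  rw [← hCZcard, hcard, hKcard']
  set k := Nat.card (LinearMap.ker f)
  have : 2 ^ d * k - k = (2 ^ d - 1) * k := by
    rw [Nat.sub_mul, one_mul]
  rw [this]
  ring
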